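/- arXiv:2504.19328 — 2 statements merged into one kernel-verified Lean document; each statement's English description precedes it below -/
import Mathlib

section
/- Let G be a simple graph on a finite vertex type. Define inductively: S₁ is the set of subgraphs of G consisting of a single edge together with its two endpoints, and S_{k+1} is the set of all one-edge expansions of members of S_k. Then for every k ≥ 1, S_k is exactly the set of connected subgraphs of G whose edge set has cardinality k. -/
/-- The set of one-edge expansions of a subgraph `H` of `G`: all subgraphs obtained from
`H` by adding a single edge `{v,w}` of `G` not in `H` with `v` a vertex of `H`,
together with its other endpoint `w`. -/
def oneEdgeExpansions {V : Type*} (G : SimpleGraph V) (H : G.Subgraph) :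
    Set G.Subgraph :=
  {H' | ∃ (v w : V) (hadj : G.Adj v w),
    v ∈ H.verts ∧ s(v, w) ∉ H.edgeSet ∧ H' = H ⊔ G.subgraphOfAdj hadj}

/-- The inductively defined families: `S G 1` is the set of single-edge subgraphs
(an edge together with its two endpoints), and `S G (k+1)` is the set of all
one-edge expansions of members of `S G k`. (`S G 0` is irrelevant and set to `∅`.) -/
def S {V : Type*} [Fintype V] (G : SimpleGraph V) : ℕ → Set G.Subgraph
  | 0 => ∅
  | 1 => {H | ∃ (v w : V) (hadj : G.Adj v w), H = G.subgraphOfAdj hadj}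
  | (k + 2) => {H' | ∃ H ∈ S G (k + 1), H' ∈ oneEdgeExpansions G H}

namespace SAux

variable {V : Type*} {G : SimpleGraph V}

open SimpleGraph

lemma edgeSet_deleteEdges' (H : G.Subgraph) (s : Set (Sym2 V)) :
    (H.deleteEdges s).edgeSet = H.edgeSet \ s := by
  ext e
  induction e using Sym2.ind with
  | _ a b =>
    simp [Subgraph.mem_edgeSet, Subgraph.deleteEdges_adj, Set.mem_diff]

lemma toSubgraph_le_deleteEdges {H : G.Subgraph} {a b : V} {q : G.Walk a b}
    (hq : q.toSubgraph ≤ H) {e : Sym2 V} (he : e ∉ q.edges) :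
    q.toSubgraph ≤ H.deleteEdges {e} := by
  refine ⟨by simpa [Subgraph.deleteEdges_verts] using hq.1, ?_⟩
  intro x y hxy
  rw [Subgraph.deleteEdges_adj]
  refine ⟨hq.2 hxy, ?_⟩
  simp only [Set.mem_singleton_iff]
  rintro rfl
  exact he (q.mem_edges_toSubgraph.mp hxy)

lemma takeUntil_toSubgraph_le [DecidableEq V] {u v w : V} (p : G.Walk u v) (h : w ∈ p.support) :
    (p.takeUntil w h).toSubgraph ≤ p.toSubgraph := by
  conv_rhs => rw [← p.take_spec h]
  rw [Walk.toSubgraph_append]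
  exact le_sup_left

lemma dropUntil_toSubgraph_le [DecidableEq V] {u v w : V} (p : G.Walk u v) (h : w ∈ p.support) :
    (p.dropUntil w h).toSubgraph ≤ p.toSubgraph := by
  conv_rhs => rw [← p.take_spec h]
  rw [Walk.toSubgraph_append]
  exact le_sup_right

lemma bypass_toSubgraph_le [DecidableEq V] {u v : V} (p : G.Walk u v) :
    p.bypass.toSubgraph ≤ p.toSubgraph := by
  refine ⟨?_, ?_⟩
  · intro x hx
    rw [Walk.mem_verts_toSubgraph] at hx ⊢
    exact p.support_bypass_subset hx
  · intro x y hxy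
    rw [← Subgraph.mem_edgeSet, p.bypass.mem_edges_toSubgraph] at hxy
    rw [← Subgraph.mem_edgeSet, p.mem_edges_toSubgraph]
    exact p.edges_bypass_subset hxy


lemma le_mk {H K : G.Subgraph} (h1 : H.verts ⊆ K.verts)
    (h2 : ∀ ⦃x y : V⦄, H.Adj x y → K.Adj x y) : H ≤ K :=
  And.intro h1 h2

/-- Walk replacement. -/
lemma walk_replace {H : G.Subgraph} {v w : V} {q : G.Walk v w}
    (hq : q.toSubgraph ≤ H.deleteEdges {s(v, w)}) {a b : V} (p : G.Walk a b)
    (hp : p.toSubgraph ≤ H) :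
    ∃ p' : G.Walk a b, p'.toSubgraph ≤ H.deleteEdges {s(v, w)} := by
  induction p with
  | nil =>
    refine ⟨Walk.nil, ?_⟩
    rw [Walk.toSubgraph, singletonSubgraph_le_iff, Subgraph.deleteEdges_verts]
    rw [Walk.toSubgraph, singletonSubgraph_le_iff] at hp
    exact hp
  | @cons a c b h p ih =>
    rw [Walk.toSubgraph, sup_le_iff] at hp
    obtain ⟨p', hp'⟩ := ih hp.2
    by_cases he : s(a, c) = s(v, w)
    · rw [Sym2.eq_iff] at he
      rcases he with ⟨rfl, rfl⟩ | ⟨rfl, rfl⟩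
      · exact ⟨q.append p', by rw [Walk.toSubgraph_append]; exact sup_le hq hp'⟩
      · exact ⟨q.reverse.append p', by
          rw [Walk.toSubgraph_append, Walk.toSubgraph_reverse]; exact sup_le hq hp'⟩
    · refine ⟨Walk.cons h p', ?_⟩
      rw [Walk.toSubgraph, sup_le_iff]
      refine ⟨?_, hp'⟩
      have hadjdel : (H.deleteEdges {s(v, w)}).Adj a c := by
        rw [Subgraph.deleteEdges_adj]
        exact ⟨hp.1.2 (by simp), by simpa using he⟩
      exact SimpleGraph.subgraphOfAdj_le_of_adj _ hadjdel

/-- The key deletion lemma. -/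
lemma exists_deletion [Fintype V] {H : G.Subgraph} (hc : H.Connected)
    (hne : H.edgeSet.Nonempty) :
    ∃ (v w : V) (hadj : G.Adj v w) (H₀ : G.Subgraph),
      H₀.Connected ∧ v ∈ H₀.verts ∧ s(v, w) ∉ H₀.edgeSet ∧
      H = H₀ ⊔ G.subgraphOfAdj hadj ∧ H₀.edgeSet = H.edgeSet \ {s(v, w)} := by
  classical
  by_cases hcyc : ∃ (v w : V), s(v, w) ∈ H.edgeSet ∧
      ∃ q : G.Walk v w, q.toSubgraph ≤ H.deleteEdges {s(v, w)}
  · obtain ⟨v, w, he, q, hq⟩ := hcyc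
    have hHadj : H.Adj v w := Subgraph.mem_edgeSet.mp he
    have hadj : G.Adj v w := H.adj_sub hHadj
    refine ⟨v, w, hadj, H.deleteEdges {s(v, w)}, ?_, ?_, ?_, ?_, edgeSet_deleteEdges' H _⟩
    · rw [Subgraph.connected_iff_forall_exists_walk_subgraph]
      refine ⟨by rw [Subgraph.deleteEdges_verts]; exact hc.nonempty, ?_⟩
      intro a b ha hb
      rw [Subgraph.deleteEdges_verts] at ha hb
      obtain ⟨p, hp⟩ := ((Subgraph.connected_iff_forall_exists_walk_subgraph H).mp hc).2 ha hb
      exact walk_replace hq p hp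
    · rw [Subgraph.deleteEdges_verts]; exact H.edge_vert hHadj
    · rw [edgeSet_deleteEdges']; simp
    · refine le_antisymm (le_mk ?_ ?_)
        (sup_le (Subgraph.deleteEdges_le _) (SimpleGraph.subgraphOfAdj_le_of_adj H hHadj))
      · intro x hx
        rw [Subgraph.verts_sup, Set.mem_union, Subgraph.deleteEdges_verts]
        exact Or.inl hx
      · intro x y hxy
        rw [Subgraph.sup_adj]
        by_cases hxyvw : s(x, y) = s(v, w)
        · refine Or.inr ?_
          rw [Sym2.eq_iff] at hxyvw
          rcases hxyvw with ⟨rfl, rfl⟩ | ⟨rfl, rfl⟩ <;> simp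
        · exact Or.inl (by rw [Subgraph.deleteEdges_adj]; exact ⟨hxy, by simpa using hxyvw⟩)
  · push_neg at hcyc
    have hbr : ∀ v w, H.Adj v w → ∀ q : G.Walk v w, q.toSubgraph ≤ H → s(v, w) ∈ q.edges := by
      intro v w hvw q hqH
      by_contra hmem
      exact hcyc v w (Subgraph.mem_edgeSet.mpr hvw) q (toSubgraph_le_deleteEdges hqH hmem)
    obtain ⟨v0, w0, h0⟩ : ∃ v w, H.Adj v w := by
      obtain ⟨e, he⟩ := hne
      induction e using Sym2.ind with
      | _ a b => exact ⟨a, b, Subgraph.mem_edgeSet.mp he⟩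
    set P : ℕ → Prop := fun n => ∃ (a b : V) (p : G.Walk a b),
      p.IsPath ∧ p.toSubgraph ≤ H ∧ p.length = n with hPdef
    have hP1 : P 1 := by
      refine ⟨v0, w0, Walk.cons (H.adj_sub h0) Walk.nil, ?_, ?_, rfl⟩
      · simp [Walk.cons_isPath_iff, (H.adj_sub h0).ne]
      · rw [Walk.toSubgraph_cons_nil_eq_subgraphOfAdj]
        exact SimpleGraph.subgraphOfAdj_le_of_adj H h0
    have hcard1 : (1 : ℕ) ≤ Fintype.card V := Fintype.card_pos_iff.mpr ⟨v0⟩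
    set N := Nat.findGreatest P (Fintype.card V) with hNdef
    have hmax : ∀ n, P n → n ≤ N := by
      intro n hn
      obtain ⟨a, b, p, hp, -, hlen⟩ := id hn
      exact Nat.le_findGreatest (hlen ▸ hp.length_lt.le) hn
    have hPN : P N := Nat.findGreatest_spec hcard1 hP1
    have h1N : 1 ≤ N := hmax 1 hP1
    obtain ⟨a, w, p, hp, hpH, hplen⟩ := hPN
    have hwa : w ≠ a := by
      rintro rfl
      rw [Walk.isPath_iff_eq_nil] at hp
      rw [hp] at hplen
      simp at hplen
      omega
    obtain ⟨v, hwv, r', hr⟩ := Walk.exists_eq_cons_of_ne hwa p.reverse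
    have hrp : (Walk.cons hwv r').IsPath := by rw [← hr]; exact hp.reverse
    have hrH : (Walk.cons hwv r').toSubgraph ≤ H := by
      rw [← hr, Walk.toSubgraph_reverse]; exact hpH
    rw [Walk.toSubgraph, sup_le_iff] at hrH
    rw [Walk.cons_isPath_iff] at hrp
    have hHwv : H.Adj w v := hrH.1.2 (by simp)
    have hleaf : ∀ x, H.Adj w x → x = v := by
      intro x hx
      by_contra hxv
      have hxw : x ≠ w := (H.adj_sub hx).ne'
      by_cases hxs : x ∈ r'.support
      · have hqH : (Walk.cons hwv (r'.takeUntil x hxs)).toSubgraph ≤ H := by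
          rw [Walk.toSubgraph, sup_le_iff]
          exact ⟨SimpleGraph.subgraphOfAdj_le_of_adj H hHwv,
            le_trans (takeUntil_toSubgraph_le r' hxs) hrH.2⟩
        have hmem := hbr w x hx _ hqH
        rw [Walk.edges_cons] at hmem
        rcases List.mem_cons.mp hmem with hmem | hmem
        · exact hxv (Sym2.congr_right.mp hmem)
        · exact hrp.2 (Walk.support_takeUntil_subset _ hxs
            (Walk.fst_mem_support_of_mem_edges _ hmem))
      · have hxs' : x ∉ p.reverse.support := by
          rw [hr, Walk.support_cons]
          simp [hxw, hxs]
        have hqp : (Walk.cons ((H.adj_sub hx).symm) p.reverse).IsPath := by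
          rw [Walk.cons_isPath_iff]
          exact ⟨hp.reverse, hxs'⟩
        have hqH : (Walk.cons ((H.adj_sub hx).symm) p.reverse).toSubgraph ≤ H := by
          rw [Walk.toSubgraph, sup_le_iff, Walk.toSubgraph_reverse]
          exact ⟨SimpleGraph.subgraphOfAdj_le_of_adj H hx.symm, hpH⟩
        have := hmax (N + 1) ⟨x, a, _, hqp, hqH, by
          rw [Walk.length_cons, Walk.length_reverse, hplen]⟩
        omega
    have hGwv : G.Adj w v := H.adj_sub hHwv
    have hvw' : v ≠ w := hGwv.ne'
    have hvH : v ∈ H.verts := H.edge_vert hHwv.symm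
    have hwH : w ∈ H.verts := H.edge_vert hHwv
    refine ⟨v, w, hGwv.symm, H.deleteVerts {w}, ?_, ?_, ?_, ?_, ?_⟩
    · rw [Subgraph.connected_iff_forall_exists_walk_subgraph]
      refine ⟨⟨v, by rw [Subgraph.deleteVerts_verts]; exact ⟨hvH, fun h => hvw' h⟩⟩, ?_⟩
      intro u x hu hx
      rw [Subgraph.deleteVerts_verts, Set.mem_diff, Set.mem_singleton_iff] at hu hx
      obtain ⟨p0, hp0⟩ := ((Subgraph.connected_iff_forall_exists_walk_subgraph H).mp hc).2 hu.1 hx.1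
      have htp : p0.bypass.IsPath := p0.bypass_isPath
      have htH : p0.bypass.toSubgraph ≤ H := le_trans (bypass_toSubgraph_le p0) hp0
      set t := p0.bypass with ht
      have hwt : w ∉ t.support := by
        intro hwt
        have ht1H : (t.takeUntil w hwt).toSubgraph ≤ H :=
          le_trans (takeUntil_toSubgraph_le t hwt) htH
        have ht2H : (t.dropUntil w hwt).toSubgraph ≤ H :=
          le_trans (dropUntil_toSubgraph_le t hwt) htH
        obtain ⟨b, hb, t2', ht2eq⟩ := Walk.exists_eq_cons_of_ne (Ne.symm hx.2) (t.dropUntil w hwt)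
        have hHb : H.Adj w b := by
          rw [ht2eq, Walk.toSubgraph, sup_le_iff] at ht2H
          exact ht2H.1.2 (by simp)
        have hbv : b = v := hleaf b hHb
        have hv2 : v ∈ (t.dropUntil w hwt).support.tail := by
          rw [ht2eq, Walk.support_cons, List.tail_cons, ← hbv]
          exact t2'.start_mem_support
        obtain ⟨c, hcadj, t1', ht1eq⟩ :=
          Walk.exists_eq_cons_of_ne (Ne.symm hu.2) (t.takeUntil w hwt).reverse
        have hHc : H.Adj w c := by
          have hrev : (t.takeUntil w hwt).reverse.toSubgraph ≤ H := by
            rw [Walk.toSubgraph_reverse]; exact ht1H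
          rw [ht1eq, Walk.toSubgraph, sup_le_iff] at hrev
          exact hrev.1.2 (by simp)
        have hcv : c = v := hleaf c hHc
        have hv1 : v ∈ (t.takeUntil w hwt).support := by
          have hmemrev : v ∈ (t.takeUntil w hwt).reverse.support := by
            rw [ht1eq, Walk.support_cons]
            exact List.mem_cons_of_mem _ (hcv ▸ t1'.start_mem_support)
          rwa [Walk.support_reverse, List.mem_reverse] at hmemrev
        have hnodup := htp.support_nodup
        rw [← t.take_spec hwt, Walk.support_append] at hnodup
        exact (List.disjoint_of_nodup_append hnodup) hv1 hv2
      refine ⟨t, ⟨?_, ?_⟩⟩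
      · intro z hz
        rw [Walk.mem_verts_toSubgraph] at hz
        rw [Subgraph.deleteVerts_verts, Set.mem_diff, Set.mem_singleton_iff]
        refine ⟨htH.1 ((t.mem_verts_toSubgraph).mpr hz), ?_⟩
        rintro rfl; exact hwt hz
      · intro z y hzy
        rw [Subgraph.deleteVerts_adj]
        have hz : z ∈ t.support := (t.mem_verts_toSubgraph).mp (t.toSubgraph.edge_vert hzy)
        have hy : y ∈ t.support := (t.mem_verts_toSubgraph).mp (t.toSubgraph.edge_vert hzy.symm)
        refine ⟨htH.1 ((t.mem_verts_toSubgraph).mpr hz), ?_,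
          htH.1 ((t.mem_verts_toSubgraph).mpr hy), ?_, htH.2 hzy⟩
        · simp only [Set.mem_singleton_iff]; rintro rfl; exact hwt hz
        · simp only [Set.mem_singleton_iff]; rintro rfl; exact hwt hy
    · rw [Subgraph.deleteVerts_verts]
      exact ⟨hvH, fun h => hvw' h⟩
    · simp [Subgraph.mem_edgeSet, Subgraph.deleteVerts_adj]
    · refine le_antisymm (le_mk ?_ ?_)
        (sup_le Subgraph.deleteVerts_le (SimpleGraph.subgraphOfAdj_le_of_adj H hHwv.symm))
      · intro x hx
        rw [Subgraph.verts_sup, Set.mem_union, Subgraph.deleteVerts_verts]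
        by_cases hxw : x = w
        · subst hxw; right; simp
        · exact Or.inl ⟨hx, fun h => hxw h⟩
      · intro x y hxy
        rw [Subgraph.sup_adj]
        by_cases hxw : x = w
        · subst hxw
          right
          rw [hleaf y hxy]
          simp
        · by_cases hyw : y = w
          · subst hyw
            right
            rw [hleaf x hxy.symm]
            simp
          · left
            rw [Subgraph.deleteVerts_adj]
            exact ⟨H.edge_vert hxy, fun h => hxw h,
              H.edge_vert hxy.symm, fun h => hyw h, hxy⟩
    · ext e
      induction e using Sym2.ind with
      | _ x y =>
        simp only [Subgraph.mem_edgeSet, Subgraph.deleteVerts_adj, Set.mem_diff,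
          Set.mem_singleton_iff]
        constructor
        · rintro ⟨hxH, hxw, hyH, hyw, hxy⟩
          refine ⟨hxy, ?_⟩
          rw [Sym2.eq_iff]
          rintro (⟨rfl, rfl⟩ | ⟨rfl, rfl⟩)
          · exact hyw rfl
          · exact hxw rfl
        · rintro ⟨hxy, hne⟩
          refine ⟨H.edge_vert hxy, ?_, H.edge_vert hxy.symm, ?_, hxy⟩
          · intro h
            have hxw : x = w := h
            subst hxw
            exact hne (by rw [hleaf y hxy]; exact Sym2.eq_swap)
          · intro h
            have hyw : y = w := h
            subst hyw
            exact hne (by rw [hleaf x hxy.symm])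
    
lemma eq_subgraphOfAdj_of_card_one {H : G.Subgraph} (hc : H.Connected)
    (h1 : H.edgeSet.ncard = 1) :
    ∃ (v w : V) (hadj : G.Adj v w), H = G.subgraphOfAdj hadj := by
  rw [Set.ncard_eq_one] at h1
  obtain ⟨e, he⟩ := h1
  induction e using Sym2.ind with
  | _ v w =>
    have hHvw : H.Adj v w := Subgraph.mem_edgeSet.mp (by rw [he]; rfl)
    refine ⟨v, w, H.adj_sub hHvw, ?_⟩
    refine le_antisymm (le_mk ?_ ?_) (SimpleGraph.subgraphOfAdj_le_of_adj H hHvw)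
    · intro x hx
      have hvH : v ∈ H.verts := H.edge_vert hHvw
      obtain ⟨p, hp⟩ := ((Subgraph.connected_iff_forall_exists_walk_subgraph H).mp hc).2 hx hvH
      cases p with
      | nil => simp
      | @cons _ c _ h q =>
        rw [Walk.toSubgraph, sup_le_iff] at hp
        have hHxc : H.Adj x c := hp.1.2 (by simp)
        have hmem : s(x, c) ∈ H.edgeSet := hHxc
        rw [he, Set.mem_singleton_iff, Sym2.eq_iff] at hmem
        rcases hmem with ⟨rfl, rfl⟩ | ⟨rfl, rfl⟩ <;> simp
    · intro x y hxy
      have hmem : s(x, y) ∈ H.edgeSet := hxy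
      rw [he, Set.mem_singleton_iff] at hmem
      rw [SimpleGraph.subgraphOfAdj_adj]
      exact hmem.symm

end SAux

/-- For every `k ≥ 1`, `S G k` is exactly the set of connected
subgraphs of `G` whose edge set has cardinality `k`. -/
theorem S_eq_connected_subgraphs_with_k_edges {V : Type*} [Fintype V]
    (G : SimpleGraph V) (k : ℕ) (hk : 1 ≤ k) :
    S G k = {H : G.Subgraph | H.Connected ∧ H.edgeSet.ncard = k} := by
  induction k, hk using Nat.le_induction with
  | base =>
    ext H
    simp only [S, Set.mem_setOf_eq]
    constructor
    · rintro ⟨v, w, hadj, rfl⟩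
      refine ⟨SimpleGraph.Subgraph.subgraphOfAdj_connected hadj, ?_⟩
      rw [SimpleGraph.edgeSet_subgraphOfAdj, Set.ncard_singleton]
    · rintro ⟨hc, h1⟩
      exact SAux.eq_subgraphOfAdj_of_card_one hc h1
  | succ n hn ih =>
    obtain ⟨m, rfl⟩ : ∃ m, n = m + 1 := ⟨n - 1, by omega⟩
    ext H'
    simp only [S, oneEdgeExpansions, Set.mem_setOf_eq]
    constructor
    · rintro ⟨H, hHS, v, w, hadj, hv, hnot, rfl⟩
      rw [ih] at hHS
      obtain ⟨hc, hcard⟩ := hHS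
      refine ⟨SimpleGraph.Subgraph.connected_sup hc.preconnected (SimpleGraph.Subgraph.subgraphOfAdj_connected hadj).preconnected
        ⟨v, by rw [SimpleGraph.Subgraph.verts_inf]; exact ⟨hv, by simp⟩⟩, ?_⟩
      rw [SimpleGraph.Subgraph.edgeSet_sup, SimpleGraph.edgeSet_subgraphOfAdj,
        Set.union_singleton, Set.ncard_insert_of_notMem hnot (Set.toFinite _), hcard]
    · rintro ⟨hc, hcard⟩
      have hne : H'.edgeSet.Nonempty := Set.nonempty_of_ncard_ne_zero (by omega)
      obtain ⟨v, w, hadj, H₀, h₀c, hv, hnot, heq, hES⟩ := SAux.exists_deletion hc hne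
      have hmem : s(v, w) ∈ H'.edgeSet := by
        rw [heq, SimpleGraph.Subgraph.edgeSet_sup, SimpleGraph.edgeSet_subgraphOfAdj]
        exact Or.inr rfl
      refine ⟨H₀, ?_, v, w, hadj, hv, hnot, heq⟩
      rw [ih]
      refine ⟨h₀c, ?_⟩
      rw [hES, Set.ncard_diff_singleton_of_mem hmem, hcard]
      omega
end

section
/- Let L₁ and L₂ be simple graphs on the same vertex type (two layers) and let G = L₁ ⊔ L₂ be their union. Let H be a connected subgraph of G with k + 1 ≥ 2 edges that is inter-layer, i.e., H has at least one edge belonging to L₁ and at least one edge belonging to L₂. Then there exists a connected subgraph H' of G with k edges and an edge e of G such that H is the one-edge expansion of H' by e, and moreover either (a) H' is itself inter-layer, or (b) all edges of H' lie in a single layer L_i and e is an edge of the other layer. -/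
open SimpleGraph

section InterlayerAux

variable {V : Type*}

private lemma delete_edge_connected' {W : Type*} {C : SimpleGraph W} (hC : C.Connected)
    {a b : W} (hr : (C \ SimpleGraph.fromEdgeSet {s(a, b)}).Reachable a b) :
    (C \ SimpleGraph.fromEdgeSet {s(a, b)}).Connected := by
  rw [connected_iff]
  refine ⟨fun x y => ?_, hC.nonempty⟩
  obtain ⟨p⟩ := hC.preconnected x y
  induction p with
  | nil => exact Reachable.refl _
  | @cons x' z' y' h q ih =>
    refine Reachable.trans ?_ ih
    by_cases he : s(x', z') = s(a, b)
    · rcases Sym2.eq_iff.mp he with ⟨rfl, rfl⟩ | ⟨rfl, rfl⟩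
      · exact hr
      · exact hr.symm
    · refine Adj.reachable ?_
      rw [sdiff_adj]
      exact ⟨h, by simp [fromEdgeSet_adj, he]⟩

private lemma exists_adj' {G : SimpleGraph V} {H : G.Subgraph} (hH : H.Connected)
    {a b v : V} (hab : H.Adj a b) (hv : v ∈ H.verts) : ∃ x, H.Adj v x := by
  by_cases hva : v = a
  · exact ⟨b, hva ▸ hab⟩
  · obtain ⟨p⟩ := hH ⟨v, hv⟩ ⟨a, H.edge_vert hab⟩
    have hn : ¬ p.Nil := SimpleGraph.Walk.not_nil_of_ne (fun h => hva (congrArg Subtype.val h))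
    obtain ⟨z, h, q, rfl⟩ := SimpleGraph.Walk.not_nil_iff.mp hn
    exact ⟨↑z, h⟩

private lemma verts_finite' {G : SimpleGraph V} {H : G.Subgraph} (hH : H.Connected)
    (hfin : H.edgeSet.Finite) {a b : V} (hab : H.Adj a b) : H.verts.Finite := by
  have hsub : H.verts ⊆ ⋃ e ∈ H.edgeSet, {x : V | x ∈ e} := by
    intro v hv
    obtain ⟨x, hx⟩ := exists_adj' hH hab hv
    exact Set.mem_biUnion (SimpleGraph.Subgraph.mem_edgeSet.mpr hx) (by simp)
  refine Set.Finite.subset (hfin.biUnion fun e _ => ?_) hsub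
  induction e using Sym2.ind with
  | _ a b =>
    have : {x : V | x ∈ s(a, b)} = {a, b} := by ext x; simp [Sym2.mem_iff]
    rw [this]
    exact (Set.finite_singleton b).insert a

/-- A finite connected acyclic graph with an edge has a leaf with a unique neighbor. -/
private lemma exists_leaf' {W : Type*} [Fintype W] {C : SimpleGraph W} (hC : C.Connected)
    (hA : C.IsAcyclic) {a b : W} (hab : C.Adj a b) :
    ∃ u x : W, C.Adj u x ∧ ∀ y, C.Adj u y → y = x := by
  classical
  have htree : C.IsTree := ⟨hC, hA⟩
  have hcard := htree.card_edgeFinset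
  have hdeg := C.sum_degrees_eq_twice_card_edges
  have hn2 : 2 ≤ Fintype.card W := Fintype.one_lt_card_iff_nontrivial.mpr ⟨a, b, hab.ne⟩
  have hexist : ∃ u : W, C.degree u < 2 := by
    by_contra hno
    push_neg at hno
    have : 2 * Fintype.card W ≤ ∑ v : W, C.degree v := by
      calc 2 * Fintype.card W = ∑ _v : W, 2 := by
            simp [Finset.sum_const, mul_comm]
        _ ≤ ∑ v : W, C.degree v := Finset.sum_le_sum fun v _ => hno v
    rw [hdeg] at this
    omega
  obtain ⟨u, hu⟩ := hexist
  have hpos : 0 < C.degree u := by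
    rw [SimpleGraph.degree_pos_iff_exists_adj]
    have : Nontrivial W := ⟨a, b, hab.ne⟩
    obtain ⟨v, hv⟩ := exists_ne u
    obtain ⟨p⟩ := hC.preconnected u v
    have hn : ¬ p.Nil := SimpleGraph.Walk.not_nil_of_ne (Ne.symm hv)
    obtain ⟨z, h, q, rfl⟩ := SimpleGraph.Walk.not_nil_iff.mp hn
    exact ⟨z, h⟩
  have hdeg1 : C.degree u = 1 := by omega
  rw [← SimpleGraph.card_neighborFinset_eq_degree, Finset.card_eq_one] at hdeg1
  obtain ⟨x, hx⟩ := hdeg1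
  have hux : C.Adj u x := by
    rw [← SimpleGraph.mem_neighborFinset, hx]; exact Finset.mem_singleton_self x
  refine ⟨u, x, hux, fun y hy => ?_⟩
  have : y ∈ C.neighborFinset u := (SimpleGraph.mem_neighborFinset ..).mpr hy
  rw [hx] at this
  exact Finset.mem_singleton.mp this

private lemma leaf_not_mem_path_support' {W : Type*} {C : SimpleGraph W} {u x0 : W}
    (hleaf : ∀ y, C.Adj u y → y = x0) {x y : W} (hx : x ≠ u) (hy : y ≠ u)
    {p : C.Walk x y} (hp : p.IsPath) : u ∉ p.support := by
  classical
  intro hu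
  have hspec := SimpleGraph.Walk.take_spec p hu
  have hedges : p.edges = (p.takeUntil u hu).edges ++ (p.dropUntil u hu).edges := by
    conv_lhs => rw [← hspec]
    rw [SimpleGraph.Walk.edges_append]
  have hnodup := hp.isTrail.edges_nodup
  rw [hedges] at hnodup
  have hdisj := List.disjoint_of_nodup_append hnodup
  have hn1 : ¬ (p.takeUntil u hu).reverse.Nil :=
    SimpleGraph.Walk.not_nil_of_ne (fun h => hx h.symm)
  obtain ⟨z1, h1, q1, heq1⟩ := SimpleGraph.Walk.not_nil_iff.mp hn1
  have hz1 : z1 = x0 := hleaf z1 h1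
  have he1 : s(u, x0) ∈ (p.takeUntil u hu).edges := by
    rw [← List.mem_reverse, ← SimpleGraph.Walk.edges_reverse, heq1, hz1.symm]
    simp
  have hn2 : ¬ (p.dropUntil u hu).Nil := SimpleGraph.Walk.not_nil_of_ne hy.symm
  obtain ⟨z2, h2, q2, heq2⟩ := SimpleGraph.Walk.not_nil_iff.mp hn2
  have hz2 : z2 = x0 := hleaf z2 h2
  have he2 : s(u, x0) ∈ (p.dropUntil u hu).edges := by
    rw [heq2, hz2.symm]
    simp
  exact hdisj he1 he2

private lemma mem_map_sym2' {α β : Type*} {f : α → β} {l : List (Sym2 α)} {e : Sym2 β}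
    (h : e ∈ l.map (Sym2.map f)) : ∃ c d, s(c, d) ∈ l ∧ e = s(f c, f d) := by
  rcases List.mem_map.mp h with ⟨e', he', rfl⟩
  revert he'
  induction e' using Sym2.ind with
  | _ c d => intro he'; exact ⟨c, d, he', by simp [Sym2.map_pair_eq]⟩

/-- Core deconstruction lemma: a connected subgraph with finitely many and at least one
edge is a one-edge expansion of a connected subgraph with one fewer edge. -/
private lemma exists_predecessor' {G : SimpleGraph V} (H : G.Subgraph) (hH : H.Connected)
    (hfin : H.edgeSet.Finite) (hne : H.edgeSet.Nonempty) :
    ∃ (H' : G.Subgraph) (v w : V) (hadj : G.Adj v w),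
      H'.Connected ∧ v ∈ H'.verts ∧ s(v, w) ∉ H'.edgeSet ∧
      H = H' ⊔ G.subgraphOfAdj hadj ∧ H.edgeSet = insert s(v, w) H'.edgeSet := by
  classical
  by_cases hcyc : ∃ (u : ↥H.verts) (c : H.coe.Walk u u), c.IsCycle
  · -- cycle case : delete a cycle edge
    obtain ⟨u, c, hc⟩ := hcyc
    have hn : ¬ c.Nil := hc.not_nil
    obtain ⟨z, hadjc, q, hceq⟩ := SimpleGraph.Walk.not_nil_iff.mp hn
    have hmem : s(u, z) ∈ c.edges := by rw [hceq]; simp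
    have hr : (H.coe \ SimpleGraph.fromEdgeSet {s(u, z)}).Reachable u z :=
      (SimpleGraph.adj_and_reachable_delete_edges_iff_exists_cycle.mpr ⟨u, c, hc, hmem⟩).2
    have hconn' := delete_edge_connected' hH.coe hr
    have hHab : H.Adj ↑u ↑z := hadjc
    have hadjG : G.Adj ↑u ↑z := H.adj_sub hHab
    set H' : G.Subgraph :=
      ⟨H.verts, fun x y => H.Adj x y ∧ s(x, y) ≠ s((u : V), (z : V)),
        fun h => H.adj_sub h.1, fun h => H.edge_vert h.1,
        ⟨fun x y h => ⟨h.1.symm, by rw [Sym2.eq_swap]; exact h.2⟩⟩⟩ with hH'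
    have hHeq : H = H' ⊔ G.subgraphOfAdj hadjG := by
      apply SimpleGraph.Subgraph.ext
      · show H.verts = H'.verts ∪ {↑u, ↑z}
        rw [hH']
        rw [Set.union_eq_self_of_subset_right]
        rintro x (rfl | rfl)
        · exact u.2
        · exact z.2
      · funext x y
        apply propext
        simp only [SimpleGraph.Subgraph.sup_adj, SimpleGraph.subgraphOfAdj_adj, hH']
        constructor
        · intro h
          by_cases heq : s(x, y) = s((u : V), (z : V))
          · exact Or.inr heq.symm
          · exact Or.inl ⟨h, heq⟩
        · rintro (⟨h, -⟩ | heq)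
          · exact h
          · rcases Sym2.eq_iff.mp heq.symm with ⟨rfl, rfl⟩ | ⟨rfl, rfl⟩
            · exact hHab
            · exact hHab.symm
    refine ⟨H', ↑u, ↑z, hadjG, ?_, u.2, fun h => h.2 rfl, hHeq, ?_⟩
    · constructor
      have hiso : H'.coe = (H.coe \ SimpleGraph.fromEdgeSet {s(u, z)}) := by
        ext x y
        show (H.Adj ↑x ↑y ∧ s((x : V), (y : V)) ≠ s((u : V), (z : V))) ↔ _
        rw [sdiff_adj, SimpleGraph.fromEdgeSet_adj]
        constructor
        · rintro ⟨h, hne2⟩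
          refine ⟨h, ?_⟩
          rintro ⟨heq, -⟩
          apply hne2
          have := congrArg (Sym2.map (Subtype.val : ↥H.verts → V)) heq
          simpa [Sym2.map_pair_eq] using this
        · rintro ⟨h, hne2⟩
          refine ⟨h, fun heq => hne2 ⟨?_, ?_⟩⟩
          · refine Sym2.map.injective Subtype.val_injective ?_
            simpa [Sym2.map_pair_eq] using heq
          · exact (h : H.coe.Adj x y).ne
      rw [hiso]
      exact hconn'
    · conv_lhs => rw [hHeq]
      rw [SimpleGraph.Subgraph.edgeSet_sup, SimpleGraph.edgeSet_subgraphOfAdj,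
        Set.union_singleton]
  · -- acyclic case : delete a leaf
    have hA : H.coe.IsAcyclic := fun u c hc => hcyc ⟨u, c, hc⟩
    obtain ⟨e, he⟩ := hne
    obtain ⟨a, b, rfl⟩ : ∃ a b, e = s(a, b) := by
      induction e using Sym2.ind with
      | _ a b => exact ⟨a, b, rfl⟩
    have hab : H.Adj a b := SimpleGraph.Subgraph.mem_edgeSet.mp he
    have hVfin : H.verts.Finite := verts_finite' hH hfin hab
    haveI : Fintype ↥H.verts := hVfin.fintype
    have hCab : H.coe.Adj ⟨a, H.edge_vert hab⟩ ⟨b, H.edge_vert hab.symm⟩ := hab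
    obtain ⟨u0, x0, hadj0, huniq⟩ := exists_leaf' hH.coe hA hCab
    have hu_adj : H.Adj ↑u0 ↑x0 := hadj0
    have hleafV : ∀ y, H.Adj ↑u0 y → y = ↑x0 := by
      intro y hy
      have : H.coe.Adj u0 ⟨y, H.edge_vert hy.symm⟩ := hy
      exact congrArg Subtype.val (huniq _ this)
    have hadjG : G.Adj ↑x0 ↑u0 := H.adj_sub hu_adj.symm
    have haa_ne : (↑x0 : V) ≠ ↑u0 := (H.adj_sub hu_adj).ne'
    set H' : G.Subgraph :=
      ⟨H.verts \ {↑u0}, fun x y => H.Adj x y ∧ x ≠ ↑u0 ∧ y ≠ ↑u0,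
        fun h => H.adj_sub h.1, fun h => ⟨H.edge_vert h.1, h.2.1⟩,
        ⟨fun x y h => ⟨h.1.symm, h.2.2, h.2.1⟩⟩⟩ with hH'
    have haa_mem : (↑x0 : V) ∈ H'.verts := ⟨H.edge_vert hu_adj.symm, by simpa using haa_ne⟩
    have hHeq : H = H' ⊔ G.subgraphOfAdj hadjG := by
      apply SimpleGraph.Subgraph.ext
      · show H.verts = (H.verts \ {↑u0}) ∪ {↑x0, ↑u0}
        ext x
        simp only [Set.mem_union, Set.mem_diff, Set.mem_insert_iff, Set.mem_singleton_iff]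
        constructor
        · intro hxv
          by_cases hxu : x = ↑u0
          · exact Or.inr (Or.inr hxu)
          · exact Or.inl ⟨hxv, hxu⟩
        · rintro (⟨h, -⟩ | rfl | rfl)
          · exact h
          · exact H.edge_vert hu_adj.symm
          · exact H.edge_vert hu_adj
      · funext x y
        apply propext
        simp only [SimpleGraph.Subgraph.sup_adj, SimpleGraph.subgraphOfAdj_adj, hH']
        constructor
        · intro h
          by_cases hxu : x = ↑u0
          · subst hxu
            right
            rw [hleafV y h]
            exact Sym2.eq_swap
          · by_cases hyu : y = ↑u0
            · subst hyu
              right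
              rw [hleafV x h.symm]
            · exact Or.inl ⟨h, hxu, hyu⟩
        · rintro (⟨h, -, -⟩ | heq)
          · exact h
          · rcases Sym2.eq_iff.mp heq.symm with ⟨rfl, rfl⟩ | ⟨rfl, rfl⟩
            · exact hu_adj.symm
            · exact hu_adj
    refine ⟨H', ↑x0, ↑u0, hadjG, ?_, haa_mem, fun h => h.2.2 rfl, hHeq, ?_⟩
    · rw [SimpleGraph.Subgraph.connected_iff_forall_exists_walk_subgraph]
      refine ⟨⟨↑x0, haa_mem⟩, ?_⟩
      intro x y hx hy
      have hx2 : x ≠ ↑u0 := fun h => hx.2 (by simp [h])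
      have hy2 : y ≠ ↑u0 := fun h => hy.2 (by simp [h])
      obtain ⟨p0⟩ := hH ⟨x, hx.1⟩ ⟨y, hy.1⟩
      set p : H.coe.Walk ⟨x, hx.1⟩ ⟨y, hy.1⟩ := p0.toPath.val with hpdef
      have hppath : p.IsPath := p0.toPath.2
      have hps : u0 ∉ p.support :=
        leaf_not_mem_path_support' huniq
          (fun h => hx2 (congrArg Subtype.val h))
          (fun h => hy2 (congrArg Subtype.val h)) hppath
      refine ⟨p.map H.hom, ?_, ?_⟩
      · intro zz hz
        have hz : zz ∈ p.support.map H.hom := by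
          have h := (SimpleGraph.Walk.mem_verts_toSubgraph _).mp hz; rw [← SimpleGraph.Walk.support_map]; exact h
        rcases List.mem_map.mp hz with ⟨z', hz', rfl⟩
        refine ⟨z'.2, ?_⟩
        intro hzz
        apply hps
        have hz'u : z' = u0 := Subtype.ext (by simpa using hzz)
        exact hz'u ▸ hz'
      · intro x' y' hxy
        have hmem : s(x', y') ∈ (p.map H.hom).edges := by
          have : s(x', y') ∈ (p.map H.hom).toSubgraph.edgeSet :=
            SimpleGraph.Subgraph.mem_edgeSet.mpr hxy
          rwa [SimpleGraph.Walk.edgeSet_toSubgraph] at this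
        rw [SimpleGraph.Walk.edges_map] at hmem
        obtain ⟨cc, dd, hcd, heq⟩ := mem_map_sym2' hmem
        have hcdH : H.Adj ↑cc ↑dd := SimpleGraph.Walk.edges_subset_edgeSet p hcd
        have hcs : cc ∈ p.support := SimpleGraph.Walk.fst_mem_support_of_mem_edges p hcd
        have hds : dd ∈ p.support := SimpleGraph.Walk.snd_mem_support_of_mem_edges p hcd
        have hcne : (↑cc : V) ≠ ↑u0 := fun h => hps (Subtype.ext h ▸ hcs)
        have hdne : (↑dd : V) ≠ ↑u0 := fun h => hps (Subtype.ext h ▸ hds)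
        have hadj' : H'.Adj ↑cc ↑dd := ⟨hcdH, hcne, hdne⟩
        rcases Sym2.eq_iff.mp heq with ⟨rfl, rfl⟩ | ⟨rfl, rfl⟩
        · exact hadj'
        · exact hadj'.symm
    · conv_lhs => rw [hHeq]
      rw [SimpleGraph.Subgraph.edgeSet_sup, SimpleGraph.edgeSet_subgraphOfAdj,
        Set.union_singleton]

end InterlayerAux

/-- Let `G = L₁ ⊔ L₂` be the union of two layers and let `H` be a
connected inter-layer subgraph of `G` with `k + 1 ≥ 2` edges (it has an edge belonging
to `L₁` and an edge belonging to `L₂`). Then `H` is a one-edge expansion of a connected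
subgraph `H'` with `k` edges by some edge `e = {v,w}` of `G`, where either (a) `H'` is
itself inter-layer, or (b) all edges of `H'` lie in a single layer `Lᵢ` and `e` is an
edge of the other layer. -/
theorem interlayer_expansion_predecessor {V : Type*} (L₁ L₂ : SimpleGraph V)
    (k : ℕ) (hk : 1 ≤ k) (H : (L₁ ⊔ L₂).Subgraph) (hH : H.Connected)
    (hcard : H.edgeSet.ncard = k + 1)
    (h₁ : ∃ e ∈ H.edgeSet, e ∈ L₁.edgeSet) (h₂ : ∃ e ∈ H.edgeSet, e ∈ L₂.edgeSet) :
    ∃ (H' : (L₁ ⊔ L₂).Subgraph) (v w : V) (hadj : (L₁ ⊔ L₂).Adj v w),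
      H'.Connected ∧ H'.edgeSet.ncard = k ∧ v ∈ H'.verts ∧ s(v, w) ∉ H'.edgeSet ∧
      H = H' ⊔ (L₁ ⊔ L₂).subgraphOfAdj hadj ∧
      (((∃ e ∈ H'.edgeSet, e ∈ L₁.edgeSet) ∧ (∃ e ∈ H'.edgeSet, e ∈ L₂.edgeSet)) ∨
        (H'.edgeSet ⊆ L₁.edgeSet ∧ s(v, w) ∈ L₂.edgeSet) ∨
        (H'.edgeSet ⊆ L₂.edgeSet ∧ s(v, w) ∈ L₁.edgeSet)) := by
  classical
  obtain ⟨e₁, he₁H, he₁L⟩ := h₁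
  obtain ⟨e₂, he₂H, he₂L⟩ := h₂
  have hne : H.edgeSet.Nonempty := ⟨e₁, he₁H⟩
  have hfin : H.edgeSet.Finite := by
    by_contra hinf
    have : H.edgeSet.ncard = 0 := Set.Infinite.ncard hinf
    omega
  obtain ⟨H', v, w, hadj, hconn, hvmem, hnotmem, hHeq, hedges⟩ :=
    exists_predecessor' H hH hfin hne
  have hsub : H'.edgeSet ⊆ H.edgeSet := by
    rw [hedges]; exact Set.subset_insert _ _
  have hfin' : H'.edgeSet.Finite := hfin.subset hsub
  have hcard' : H'.edgeSet.ncard = k := by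
    have : H.edgeSet.ncard = H'.edgeSet.ncard + 1 := by
      rw [hedges, Set.ncard_insert_of_notMem hnotmem hfin']
    omega
  have hlayer : ∀ e ∈ H'.edgeSet, e ∈ L₁.edgeSet ∨ e ∈ L₂.edgeSet := by
    intro e he
    have : e ∈ (L₁ ⊔ L₂).edgeSet := H'.edgeSet_subset he
    rwa [SimpleGraph.edgeSet_sup] at this
  refine ⟨H', v, w, hadj, hconn, hcard', hvmem, hnotmem, hHeq, ?_⟩
  by_cases hW1 : ∃ e ∈ H'.edgeSet, e ∈ L₁.edgeSet
  · by_cases hW2 : ∃ e ∈ H'.edgeSet, e ∈ L₂.edgeSet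
    · exact Or.inl ⟨hW1, hW2⟩
    · refine Or.inr (Or.inl ⟨?_, ?_⟩)
      · intro e he
        rcases hlayer e he with h | h
        · exact h
        · exact absurd ⟨e, he, h⟩ hW2
      · have he2v : e₂ = s(v, w) := by
          by_contra hne2
          rw [hedges, Set.mem_insert_iff] at he₂H
          rcases he₂H with h | h
          · exact hne2 h
          · exact hW2 ⟨e₂, h, he₂L⟩
        rwa [← he2v]
  · refine Or.inr (Or.inr ⟨?_, ?_⟩)
    · intro e he
      rcases hlayer e he with h | h
      · exact absurd ⟨e, he, h⟩ hW1
      · exact h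
    · have he1v : e₁ = s(v, w) := by
        by_contra hne1
        rw [hedges, Set.mem_insert_iff] at he₁H
        rcases he₁H with h | h
        · exact hne1 h
        · exact hW1 ⟨e₁, h, he₁L⟩
      rwa [← he1v]
end
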